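/- Let f(x) = a_0 x^n + ... + a_n be a real polynomial of degree n and let 2 ≤ M ≤ n. If all the leading coefficients h_0, h_1, ..., h_n of the polynomials f_0, ..., f_n produced by the generalized Euclidean algorithm with step M are positive, then all the coefficients a_0, a_1, ..., a_n of f are positive. -/

import Mathlib

/-!
Write `f_i = gea a n M i`. Every exponent `k` of `f_i` satisfies `k + i ≡ n (mod M)`, and the step
`f_{i+M} = f_i % f_{i+1}` preserves this, since dividing a polynomial of class `r + 1` by one of
class `r` only ever subtracts multiples `c x^e f_{i+1}` with `e ≡ 1`. When no `f_i` vanishes, the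
degrees are therefore forced to be `deg f_i = n - i`: this holds for `i = 0` as `a_0 ≠ 0`, and
since a remainder has degree below its divisor and lies in the right class, a deficit at an index
`i ≥ 1` would reappear at `i + M - 1`, and so on past `n`.
Consequently each quotient is the monomial `(h_i / h_{i+1}) x`, i.e.
`f_i = f_{i+M} + (h_i / h_{i+1}) x f_{i+1}`, and a descending induction on `i` shows that every
coefficient of `f_i` in its residue class is positive; for `i < M` these are the `a_l`, `l ≡ i`.
-/

open Polynomial

/-- The arithmetic part `f_j` of the polynomial with coefficients `a_0,...,a_n`:
`f_j(x) = Σ_{0 ≤ l ≤ n, l ≡ j (mod M)} a_l x^(n-l)`. -/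
noncomputable def geaInit (a : ℕ → ℝ) (n M j : ℕ) : Polynomial ℝ :=
  ∑ l ∈ Finset.range (n + 1), if l % M = j then C (a l) * X ^ (n - l) else 0

/-- The polynomials `f_0, f_1, ..., f_n` of the generalized Euclidean algorithm with step `M`:
`f_i = d_i f_{i+1} + f_{i+M}` where `d_i = f_i / f_{i+1}` and `f_{i+M} = f_i % f_{i+1}`
(Euclidean division of polynomials). -/
noncomputable def gea (a : ℕ → ℝ) (n M : ℕ) : ℕ → Polynomial ℝ
  | i =>
    if _h : i < M then geaInit a n M i
    else if _h2 : 2 ≤ M then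
      gea a n M (i - M) % gea a n M (i - M + 1)
    else 0
  termination_by i => i
  decreasing_by all_goals omega

namespace Polynomial

section

variable {R : Type*}

def IsHomogeneousMod [Semiring R] (M : ℕ) (r : ZMod M) (p : R[X]) : Prop :=
  ∀ k, p.coeff k ≠ 0 → (k : ZMod M) = r

variable {M : ℕ} {r : ZMod M}

theorem isHomogeneousMod_zero [Semiring R] : IsHomogeneousMod M r (0 : R[X]) :=
  fun k hk => absurd (coeff_zero k) hk

theorem IsHomogeneousMod.natCast_natDegree [Semiring R] {p : R[X]}
    (hp : IsHomogeneousMod M r p) (h0 : p ≠ 0) : (p.natDegree : ZMod M) = r :=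
  hp _ (by rwa [coeff_natDegree, ne_eq, leadingCoeff_eq_zero])

theorem IsHomogeneousMod.sub [Ring R] {p q : R[X]} (hp : IsHomogeneousMod M r p)
    (hq : IsHomogeneousMod M r q) : IsHomogeneousMod M r (p - q) := by
  intro k hk
  rw [coeff_sub] at hk
  by_cases hpk : p.coeff k = 0
  · exact hq k (by simpa [hpk] using hk)
  · exact hp k hpk

theorem IsHomogeneousMod.C_mul_X_pow_mul [Semiring R] {q : R[X]} (hq : IsHomogeneousMod M r q)
    (c : R) (e : ℕ) : IsHomogeneousMod M (e + r) (C c * X ^ e * q) := by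
  intro k hk
  rw [mul_assoc, coeff_C_mul, coeff_X_pow_mul'] at hk
  split_ifs at hk with hek
  · rw [← hq _ (right_ne_zero_of_mul hk), Nat.cast_sub hek, add_sub_cancel]
  · simp at hk

theorem IsHomogeneousMod.degree_lt [Semiring R] {p q : R[X]} (hp : IsHomogeneousMod M (r + 1) p)
    (hq : IsHomogeneousMod M r q) (hM : M ≠ 1) (hq0 : q ≠ 0) (h : p.degree ≤ q.degree) :
    p.degree < q.degree := by
  rcases eq_or_ne p 0 with rfl | hp0
  · simpa [bot_lt_iff_ne_bot] using hq0
  refine h.lt_of_ne fun heq => hM (ZMod.one_eq_zero_iff.1 ?_)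
  have := hp.natCast_natDegree hp0
  rw [natDegree_eq_of_degree_eq heq, hq.natCast_natDegree hq0] at this
  linear_combination -this

end

section Field

variable {K : Type*} [Field K]

theorem sub_mul_mod (p q t : K[X]) : (p - t * q) % q = p % q := by
  rw [sub_mod, EuclideanDomain.mod_eq_zero.2 (dvd_mul_left q t), sub_zero]

theorem mod_eq_sub_mul_of_degree_lt {p q t : K[X]} (h : (p - t * q).degree < q.degree) :
    p % q = p - t * q := by
  have hq : q ≠ 0 := by rintro rfl; simp at h
  rw [← sub_mul_mod p q t, (mod_eq_self_iff hq).2 h]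

theorem degree_sub_C_mul_X_pow_mul_lt {p q : K[X]} (hq : q ≠ 0) (hpq : q.degree ≤ p.degree) :
    (p - C (p.leadingCoeff / q.leadingCoeff) * X ^ (p.natDegree - q.natDegree) * q).degree <
      p.degree := by
  have hp : p ≠ 0 := by rintro rfl; simp_all
  have hc : p.leadingCoeff / q.leadingCoeff ≠ 0 := by simp [hp, hq]
  apply degree_sub_lt_left _ hp
  · rw [leadingCoeff_mul, leadingCoeff_C_mul_X_pow,
      div_mul_cancel₀ _ (leadingCoeff_ne_zero.2 hq)]
  · have := natDegree_le_natDegree hpq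
    rw [degree_mul, degree_C_mul_X_pow _ hc, degree_eq_natDegree hp, degree_eq_natDegree hq]
    norm_cast
    omega

variable {M : ℕ} {r : ZMod M}

theorem IsHomogeneousMod.mod {p q : K[X]} (hp : IsHomogeneousMod M (r + 1) p)
    (hq : IsHomogeneousMod M r q) : IsHomogeneousMod M (r + 1) (p % q) := by
  induction hN : p.natDegree using Nat.strong_induction_on generalizing p with
  | _ N ih =>
  rcases eq_or_ne q 0 with rfl | hq0
  · rwa [EuclideanDomain.mod_zero]
  by_cases hpq : p.degree < q.degree
  · rwa [(mod_eq_self_iff hq0).2 hpq]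
  push Not at hpq
  have hp0 : p ≠ 0 := by rintro rfl; simp_all
  set t := C (p.leadingCoeff / q.leadingCoeff) * X ^ (p.natDegree - q.natDegree)
  have ht : IsHomogeneousMod M (r + 1) (p - t * q) := by
    have he : ((p.natDegree - q.natDegree : ℕ) : ZMod M) + r = r + 1 := by
      rw [Nat.cast_sub (natDegree_le_natDegree hpq), hp.natCast_natDegree hp0,
        hq.natCast_natDegree hq0]
      ring
    exact hp.sub (he ▸ hq.C_mul_X_pow_mul _ _)
  rw [← sub_mul_mod p q t]
  rcases eq_or_ne (p - t * q) 0 with h0 | h0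
  · rw [h0, EuclideanDomain.zero_mod]
    exact isHomogeneousMod_zero
  · exact ih _ (hN ▸ natDegree_lt_natDegree h0 (degree_sub_C_mul_X_pow_mul_lt hq0 hpq)) ht rfl

end Field

end Polynomial

section

variable {a : ℕ → ℝ} {n M i k : ℕ}

theorem coeff_geaInit (a : ℕ → ℝ) (n M j k : ℕ) :
    (geaInit a n M j).coeff k = if k ≤ n ∧ (n - k) % M = j then a (n - k) else 0 := by
  simp only [geaInit, finsetSum_coeff, apply_ite (coeff · k), coeff_C_mul_X_pow, coeff_zero]
  split_ifs with h
  · rw [Finset.sum_eq_single (n - k)] <;> grind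
  · exact Finset.sum_eq_zero (by grind)

theorem natDegree_geaInit_le (a : ℕ → ℝ) (n M j : ℕ) :
    (geaInit a n M j).natDegree ≤ n - j := by
  refine natDegree_le_iff_coeff_eq_zero.2 fun k hk => ?_
  rw [coeff_geaInit, if_neg]
  have := Nat.mod_le (n - k) M
  omega

theorem gea_of_lt (h : i < M) : gea a n M i = geaInit a n M i := by
  rw [gea, dif_pos h]

theorem gea_add (hM : 2 ≤ M) : gea a n M (i + M) = gea a n M i % gea a n M (i + 1) := by
  rw [gea, dif_neg (by omega), dif_pos hM, Nat.add_sub_cancel]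

theorem natDegree_gea_zero (hM : 2 ≤ M) (ha0 : a 0 ≠ 0) : (gea a n M 0).natDegree = n := by
  rw [gea_of_lt (by omega)]
  refine le_antisymm (natDegree_geaInit_le a n M 0) (le_natDegree_of_ne_zero ?_)
  simpa [coeff_geaInit] using ha0

theorem isHomogeneousMod_gea (hM : 2 ≤ M) (i : ℕ) :
    IsHomogeneousMod M ((n : ZMod M) - i) (gea a n M i) := by
  induction i using Nat.strong_induction_on with
  | _ i ih =>
  by_cases hi : i < M
  · intro k hk
    rw [gea_of_lt hi, coeff_geaInit] at hk
    split_ifs at hk with h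
    · rw [← h.2, ZMod.natCast_mod, Nat.cast_sub h.1]
      ring
    · exact absurd rfl hk
  · obtain ⟨j, rfl⟩ := Nat.exists_eq_add_of_le' (not_lt.1 hi)
    have hj := ih j (by omega)
    have hshift : (n : ZMod M) - j = (n : ZMod M) - (j + 1 : ℕ) + 1 := by
      push_cast
      ring
    have hclass : (n : ZMod M) - (j + 1 : ℕ) + 1 = n - (j + M : ℕ) := by
      push_cast
      rw [ZMod.natCast_self]
      ring
    rw [gea_add hM, ← hclass]
    exact (hshift ▸ hj).mod (ih (j + 1) (by omega))

theorem modEq_of_coeff_gea_ne_zero (hM : 2 ≤ M) (h : (gea a n M i).coeff k ≠ 0) :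
    k + i ≡ n [MOD M] := by
  rw [← ZMod.natCast_eq_natCast_iff, Nat.cast_add, isHomogeneousMod_gea hM i k h]
  ring

theorem gea_ne_zero (hpos : ∀ i ≤ n, 0 < (gea a n M i).leadingCoeff) (hi : i ≤ n) :
    gea a n M i ≠ 0 :=
  leadingCoeff_ne_zero.1 (hpos i hi).ne'

theorem natDegree_gea_add_modEq (hM : 2 ≤ M) (hpos : ∀ i ≤ n, 0 < (gea a n M i).leadingCoeff)
    (hi : i ≤ n) : (gea a n M i).natDegree + i ≡ n [MOD M] :=
  modEq_of_coeff_gea_ne_zero hM (by rw [coeff_natDegree]; exact (hpos i hi).ne')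

theorem natDegree_gea_add_lt (hM : 2 ≤ M) (hpos : ∀ i ≤ n, 0 < (gea a n M i).leadingCoeff)
    (h : i + M ≤ n) : (gea a n M (i + M)).natDegree < (gea a n M (i + 1)).natDegree := by
  refine natDegree_lt_natDegree (gea_ne_zero hpos h) ?_
  rw [gea_add hM]
  exact EuclideanDomain.mod_lt _ (gea_ne_zero hpos (by omega))

theorem natDegree_gea_add_le (hM : 2 ≤ M) (hpos : ∀ i ≤ n, 0 < (gea a n M i).leadingCoeff)
    (hi : i ≤ n) : (gea a n M i).natDegree + i ≤ n := by
  induction i using Nat.strong_induction_on with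
  | _ i ih =>
  by_cases hiM : i < M
  · have := natDegree_geaInit_le a n M i
    rw [gea_of_lt hiM]
    omega
  · obtain ⟨j, rfl⟩ := Nat.exists_eq_add_of_le' (not_lt.1 hiM)
    have hlt := natDegree_gea_add_lt hM hpos hi
    have hle := ih (j + 1) (by omega) (by omega)
    exact (natDegree_gea_add_modEq hM hpos hi).le_of_lt_add (by omega)

end

section

variable {a : ℕ → ℝ} {n M : ℕ}

theorem lt_natDegree_gea_add_add (hM : 2 ≤ M) (hpos : ∀ i ≤ n, 0 < (gea a n M i).leadingCoeff)
    {i : ℕ} (hi : 0 < i) : n < (gea a n M i).natDegree + i + M := by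
  by_contra! h
  obtain ⟨j, rfl⟩ : ∃ j, i = j + 1 := ⟨i - 1, by omega⟩
  have hlt := natDegree_gea_add_lt hM hpos (i := j) (by omega)
  have hle := (natDegree_gea_add_modEq hM hpos (i := j + M) (by omega)).add_le_of_lt (by omega)
  have := lt_natDegree_gea_add_add hM hpos (i := j + M) (by omega)
  omega
termination_by n - i

theorem natDegree_gea_add (hM : 2 ≤ M) (ha0 : a 0 ≠ 0)
    (hpos : ∀ i ≤ n, 0 < (gea a n M i).leadingCoeff) {i : ℕ} (hi : i ≤ n) :
    (gea a n M i).natDegree + i = n := by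
  rcases Nat.eq_zero_or_pos i with rfl | hi0
  · exact natDegree_gea_zero hM ha0
  refine (natDegree_gea_add_le hM hpos hi).antisymm (not_lt.1 fun hlt => ?_)
  have := (natDegree_gea_add_modEq hM hpos hi).add_le_of_lt hlt
  have := lt_natDegree_gea_add_add hM hpos hi0
  omega

theorem gea_add_eq_sub_C_mul_X_mul (hM : 2 ≤ M) (ha0 : a 0 ≠ 0)
    (hpos : ∀ i ≤ n, 0 < (gea a n M i).leadingCoeff) {i : ℕ} (h : i + M ≤ n) :
    gea a n M (i + M) = gea a n M i - C ((gea a n M i).leadingCoeff /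
      (gea a n M (i + 1)).leadingCoeff) * X * gea a n M (i + 1) := by
  have hdeg := natDegree_gea_add hM ha0 hpos (i := i) (by omega)
  have hdeg' := natDegree_gea_add hM ha0 hpos (i := i + 1) (by omega)
  set p := gea a n M i
  set q := gea a n M (i + 1)
  have hp0 : p ≠ 0 := gea_ne_zero hpos (by omega)
  have hq0 : q ≠ 0 := gea_ne_zero hpos (by omega)
  have hpq : p.natDegree = q.natDegree + 1 := by omega
  have hlt := degree_sub_C_mul_X_pow_mul_lt hq0 (by
    rw [degree_eq_natDegree hp0, degree_eq_natDegree hq0, hpq]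
    exact_mod_cast q.natDegree.le_succ)
  rw [hpq, Nat.add_sub_cancel_left, pow_one, degree_eq_natDegree hp0, hpq] at hlt
  have hp : IsHomogeneousMod M ((n : ZMod M) - (i + 1 : ℕ) + 1) p := by
    convert isHomogeneousMod_gea hM i using 1
    push_cast
    ring
  have hq : IsHomogeneousMod M ((n : ZMod M) - (i + 1 : ℕ)) q := isHomogeneousMod_gea hM (i + 1)
  have hXq := hq.C_mul_X_pow_mul (p.leadingCoeff / q.leadingCoeff) 1
  rw [pow_one, Nat.cast_one, add_comm] at hXq
  rw [gea_add hM]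
  refine mod_eq_sub_mul_of_degree_lt ((hp.sub hXq).degree_lt hq (by omega) hq0 ?_)
  rw [degree_eq_natDegree hq0]
  exact Order.le_of_lt_succ hlt

theorem coeff_gea_pos (hM : 2 ≤ M) (ha0 : a 0 ≠ 0)
    (hpos : ∀ i ≤ n, 0 < (gea a n M i).leadingCoeff) {i k : ℕ} (hk : k + i ≤ n)
    (hkM : k + i ≡ n [MOD M]) : 0 < (gea a n M i).coeff k := by
  have hi : i ≤ n := by omega
  rcases hk.eq_or_lt with heq | hlt
  · have hdeg := natDegree_gea_add hM ha0 hpos hi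
    rw [show k = (gea a n M i).natDegree by omega, coeff_natDegree]
    exact hpos i hi
  have hiM : k + (i + M) ≤ n := by
    have := hkM.add_le_of_lt hlt
    omega
  have hnext : ∀ k', 0 ≤ (gea a n M (i + 1)).coeff k' := by
    intro k'
    by_cases h0 : (gea a n M (i + 1)).coeff k' = 0
    · exact h0.ge
    have := le_natDegree_of_ne_zero h0
    have := natDegree_gea_add hM ha0 hpos (i := i + 1) (by omega)
    exact (coeff_gea_pos hM ha0 hpos (by omega) (modEq_of_coeff_gea_ne_zero hM h0)).le
  have hfirst : 0 < (gea a n M (i + M)).coeff k :=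
    coeff_gea_pos hM ha0 hpos hiM (by rw [← add_assoc]; exact Nat.add_modEq_right.trans hkM)
  have hsecond : 0 ≤ (X * gea a n M (i + 1)).coeff k := by
    cases k with
    | zero => simp
    | succ k => rw [coeff_X_mul]; exact hnext k
  have hc := div_pos (hpos i hi) (hpos (i + 1) (by omega))
  rw [eq_add_of_sub_eq' (gea_add_eq_sub_C_mul_X_mul hM ha0 hpos (by omega)).symm, mul_assoc,
    coeff_add, coeff_C_mul]
  positivity
termination_by n - i

end

theorem pos_leading_coeffs_imp_pos_coeffs_general
    (n M : ℕ) (a : ℕ → ℝ) (ha0 : a 0 ≠ 0) (hM : 2 ≤ M)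
    (hpos : ∀ i ≤ n, 0 < (gea a n M i).leadingCoeff) :
    ∀ p ≤ n, 0 < a p := by
  intro p hp
  have hcoeff : (gea a n M (p % M)).coeff (n - p) = a p := by
    rw [gea_of_lt (Nat.mod_lt p (by omega)), coeff_geaInit, Nat.sub_sub_self hp,
      if_pos ⟨Nat.sub_le n p, rfl⟩]
  rw [← hcoeff]
  refine coeff_gea_pos hM ha0 hpos (by have := Nat.mod_le p M; omega) ?_
  calc n - p + p % M ≡ n - p + p [MOD M] := (Nat.mod_modEq p M).add_left _
    _ = n := Nat.sub_add_cancel hp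

/-- If all the leading coefficients `h_0, ..., h_n` of the polynomials `f_0, ..., f_n`
produced by the generalized Euclidean algorithm with step `M` are positive, then all the
coefficients `a_0, ..., a_n` of `f` are positive. -/
theorem pos_leading_coeffs_imp_pos_coeffs
    (n M : ℕ) (a : ℕ → ℝ) (ha0 : a 0 ≠ 0) (hM : 2 ≤ M) (hMn : M ≤ n)
    (hpos : ∀ i ≤ n, 0 < (gea a n M i).leadingCoeff) :
    ∀ p ≤ n, 0 < a p :=
  pos_leading_coeffs_imp_pos_coeffs_general n M a ha0 hM hpos
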